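/- Let G be a simple hypergraph on V = {x_1, ..., x_n} all of whose edges have cardinality at least 2, with cover ideal J(G) ⊆ S = K[x_1, ..., x_n], and let m = x_1 x_2 ⋯ x_n. Then for every k ≥ 1, G is k-colorable if and only if m^{k−1} ∈ J(G)^k. In particular, the chromatic number satisfies χ(G) = min{ k : m^{k−1} ∈ J(G)^k }. -/

import Mathlib

open MvPolynomial

/-- A simple hypergraph on vertex set `Fin n`: a set of nonempty edges,
no edge containing another. -/
structure SimpleHypergraph (n : ℕ) where
  edges : Finset (Finset (Fin n))
  nonempty_of_mem : ∀ e ∈ edges, e.Nonempty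
  simple : ∀ e ∈ edges, ∀ f ∈ edges, e ⊆ f → e = f

/-- `G` is `k`-colorable: there is an assignment of `k` colors to the vertices such that
every edge (of cardinality at least two) contains two vertices of different colors. -/
def Colorable {n : ℕ} (G : SimpleHypergraph n) (k : ℕ) : Prop :=
  ∃ c : Fin n → Fin k, ∀ e ∈ G.edges, 2 ≤ e.card → ∃ u ∈ e, ∃ v ∈ e, c u ≠ c v

/-- `w` is a vertex cover of `G`: it meets every edge. -/
def IsCover {n : ℕ} (G : SimpleHypergraph n) (w : Finset (Fin n)) : Prop :=
  ∀ e ∈ G.edges, (w ∩ e).Nonempty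

/-- The cover ideal of `G`, generated by the squarefree monomials corresponding to
vertex covers. -/
noncomputable def coverIdeal {n : ℕ} (K : Type*) [Field K] (G : SimpleHypergraph n) :
    Ideal (MvPolynomial (Fin n) K) :=
  Ideal.span {m | ∃ w : Finset (Fin n), IsCover G w ∧ m = ∏ i ∈ w, X i}


/-! A `k`-colouring gives `k` vertex covers with no common vertex, namely the complements of the
colour classes (an edge is not monochromatic, so it meets each of them); conversely, colouring
each vertex by a cover that misses it gives a `k`-colouring. Since `J(G)^k` is the monomial ideal
generated by the products of `k` cover monomials, `m^(k-1) ∈ J(G)^k` says exactly that some such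
product divides `m^(k-1)`, i.e. that no vertex lies in all `k` covers. -/

open Finset
open scoped Pointwise

namespace MvPolynomial

variable {σ R : Type*} [CommSemiring R]

theorem span_monomial_image_pow (A : Set (σ →₀ ℕ)) (k : ℕ) :
    Ideal.span ((fun d => monomial d (1 : R)) '' A) ^ k =
      Ideal.span ((fun d => monomial d (1 : R)) '' (k • A)) := by
  rw [Ideal.span, Submodule.span_pow]
  congr 1
  ext x
  simp only [Set.mem_pow_iff_prod, Set.mem_image, Set.mem_nsmul_iff_sum]
  constructor
  · rintro ⟨f, hf, rfl⟩
    choose g hg hgf using hf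
    exact ⟨∑ i, g i, ⟨g, hg, rfl⟩, by simp only [monomial_sum_one, hgf]⟩
  · rintro ⟨_, ⟨g, hg, rfl⟩, rfl⟩
    exact ⟨fun i => monomial (g i) 1, fun i => ⟨g i, hg i, rfl⟩, (monomial_sum_one _ _).symm⟩

theorem monomial_one_mem_span_monomial_image_iff [Nontrivial R] {d : σ →₀ ℕ}
    {A : Set (σ →₀ ℕ)} :
    monomial d (1 : R) ∈ Ideal.span ((fun d => monomial d (1 : R)) '' A) ↔
      ∃ a ∈ A, a ≤ d := by
  classical
  simp [mem_ideal_span_monomial_image, support_monomial]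

end MvPolynomial

open MvPolynomial

noncomputable def squarefreeExponent {σ : Type*} (w : Finset σ) : σ →₀ ℕ :=
  ∑ j ∈ w, Finsupp.single j 1

section SquarefreeExponent

variable {σ : Type*}

theorem monomial_squarefreeExponent (R : Type*) [CommSemiring R] (w : Finset σ) :
    monomial (squarefreeExponent w) (1 : R) = ∏ j ∈ w, X j :=
  monomial_sum_one w _

theorem squarefreeExponent_apply [DecidableEq σ] (w : Finset σ) (j : σ) :
    squarefreeExponent w j = if j ∈ w then 1 else 0 := by
  simp [squarefreeExponent, Finsupp.finsetSum_apply, Finsupp.single_apply]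

theorem sum_squarefreeExponent_apply [DecidableEq σ] {ι : Type*} (s : Finset ι)
    (W : ι → Finset σ) (j : σ) :
    (∑ i ∈ s, squarefreeExponent (W i)) j = #{i ∈ s | j ∈ W i} := by
  simp [Finsupp.finsetSum_apply, squarefreeExponent_apply]

theorem sum_squarefreeExponent_le_pred_smul_univ_iff [Fintype σ] {k : ℕ} (hk : 1 ≤ k)
    (W : Fin k → Finset σ) :
    ∑ i, squarefreeExponent (W i) ≤ (k - 1) • squarefreeExponent univ ↔
      ∀ j, ∃ i, j ∉ W i := by
  classical
  simp only [Finsupp.le_def, sum_squarefreeExponent_apply, Finsupp.smul_apply,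
    squarefreeExponent_apply, mem_univ, if_true, smul_eq_mul, mul_one]
  refine forall_congr' fun j => ?_
  rw [Nat.le_sub_one_iff_lt hk]
  simpa [filter_eq_self] using card_lt_iff_ne_univ {i | j ∈ W i}

end SquarefreeExponent

section Hypergraph

variable {n : ℕ} {G : SimpleHypergraph n} {k : ℕ}

theorem coverIdeal_eq_span_monomial_image (K : Type*) [Field K] (G : SimpleHypergraph n) :
    coverIdeal K G = Ideal.span
      ((fun d => monomial d (1 : K)) '' (squarefreeExponent '' {w | IsCover G w})) := by
  rw [coverIdeal, Set.image_image]
  congr 1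
  ext m
  simp [monomial_squarefreeExponent, eq_comm]

theorem monomial_mem_coverIdeal_pow_iff (K : Type*) [Field K] (d : Fin n →₀ ℕ) :
    monomial d (1 : K) ∈ coverIdeal K G ^ k ↔
      ∃ W : Fin k → Finset (Fin n), (∀ i, IsCover G (W i)) ∧ ∑ i, squarefreeExponent (W i) ≤ d := by
  rw [coverIdeal_eq_span_monomial_image, span_monomial_image_pow,
    monomial_one_mem_span_monomial_image_iff]
  simp only [Set.mem_nsmul_iff_sum, Set.mem_image, Set.mem_ofPred_eq]
  constructor
  · rintro ⟨_, ⟨f, hf, rfl⟩, hle⟩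
    choose W hW hWf using hf
    exact ⟨W, hW, by simpa only [hWf] using hle⟩
  · rintro ⟨W, hW, hle⟩
    exact ⟨_, ⟨_, fun i => ⟨W i, hW i, rfl⟩, rfl⟩, hle⟩

theorem colorable_iff_exists_isCover (hcard : ∀ e ∈ G.edges, 2 ≤ e.card) :
    Colorable G k ↔
      ∃ W : Fin k → Finset (Fin n), (∀ i, IsCover G (W i)) ∧ ∀ j, ∃ i, j ∉ W i := by
  constructor
  · rintro ⟨c, hc⟩
    refine ⟨fun i => {j | c j ≠ i}, fun i e he => ?_, fun j => ⟨c j, by simp⟩⟩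
    obtain ⟨u, hu, v, hv, huv⟩ := hc e he (hcard e he)
    by_cases hui : c u = i
    · exact ⟨v, by simp [hv, ← hui, Ne.symm huv]⟩
    · exact ⟨u, by simp [hu, hui]⟩
  · rintro ⟨W, hW, hmiss⟩
    choose c hc using hmiss
    refine ⟨c, fun e he _ => ?_⟩
    obtain ⟨u, hu⟩ := G.nonempty_of_mem e he
    obtain ⟨v, hv⟩ := hW (c u) e he
    obtain ⟨hvW, hve⟩ := mem_inter.1 hv
    exact ⟨u, hu, v, hve, fun huv => hc v (huv ▸ hvW)⟩

theorem Colorable.one_le (hn : 1 ≤ n) (h : Colorable G k) : 1 ≤ k := by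
  obtain ⟨c, -⟩ := h
  exact Fin.pos (c ⟨0, hn⟩)

end Hypergraph

/-- Let `G` be a simple hypergraph (`n ≥ 1`) all of whose edges have
cardinality at least `2`, with cover ideal `J(G)`, and let `m = x_1 ⋯ x_n`.  For every
`k ≥ 1`, `G` is `k`-colorable iff `m^{k-1} ∈ J(G)^k`; in particular the chromatic number
`χ(G) = min {k : G is k-colorable}` equals `min {k ≥ 1 : m^{k-1} ∈ J(G)^k}`. -/
theorem colorable_iff_pow_mem_coverIdeal_pow {n : ℕ} (K : Type*) [Field K] (hn : 1 ≤ n)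
    (G : SimpleHypergraph n) (hcard : ∀ e ∈ G.edges, 2 ≤ e.card) :
    (∀ k : ℕ, 1 ≤ k →
      (Colorable G k ↔
        (∏ j : Fin n, (X j : MvPolynomial (Fin n) K)) ^ (k - 1) ∈ coverIdeal K G ^ k)) ∧
    sInf {k : ℕ | Colorable G k} =
      sInf {k : ℕ | 1 ≤ k ∧
        (∏ j : Fin n, (X j : MvPolynomial (Fin n) K)) ^ (k - 1) ∈ coverIdeal K G ^ k} := by
  have key : ∀ k, 1 ≤ k → (Colorable G k ↔
      (∏ j : Fin n, (X j : MvPolynomial (Fin n) K)) ^ (k - 1) ∈ coverIdeal K G ^ k) := by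
    intro k hk
    rw [← monomial_squarefreeExponent, monomial_pow, one_pow, monomial_mem_coverIdeal_pow_iff,
      colorable_iff_exists_isCover hcard]
    simp only [sum_squarefreeExponent_le_pred_smul_univ_iff hk]
  refine ⟨key, congrArg sInf (Set.ext fun k => ?_)⟩
  exact ⟨fun h => ⟨h.one_le hn, (key k (h.one_le hn)).1 h⟩, fun h => (key k h.1).2 h.2⟩
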